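/- arXiv:math/0610230 — 6 statements merged into one kernel-verified Lean document; each statement's English description precedes it below -/
import Mathlib

section
/- Let O be a complete discrete valuation ring with uniformizer π, and let C^• be a cochain complex of flat, separated, π-adically complete O-modules with O-linear boundary maps ∂. Let C̄^• = C^•/πC^• be the reduction mod π. If H^i(C̄^•) = 0, then H^i(C^•) = 0. -/
/-!
If `ω` is a cocycle and `ω = dη + πξ`, then `π • dξ = dω = 0`, so `ξ` is again a cocycle because `C`
has no `π`-torsion. Hence `d : C^i → Z^{i+1}` is surjective modulo `π Z^{i+1}`. Since `C^i` is
`π`-adically complete and `Z^{i+1} ⊆ C^{i+1}` is `π`-adically separated, successive approximation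
makes it surjective.
-/

open Submodule

theorem IsHausdorff.of_injective {R M N : Type*} [CommRing R] [AddCommGroup M] [Module R M]
    [AddCommGroup N] [Module R N] {I : Ideal R} [IsHausdorff I N] {f : M →ₗ[R] N}
    (hf : Function.Injective f) : IsHausdorff I M where
  haus' x hx := hf <| by
    rw [map_zero]
    refine IsHausdorff.haus' (I := I) (f x) fun n ↦ ?_
    rw [SModEq.zero]
    exact smul_top_le_comap_smul_top _ f ((SModEq.zero).mp (hx n))

section ThreeTermComplex

variable {R M N P : Type*} [CommRing R] [AddCommGroup M] [Module R M]
  [AddCommGroup N] [Module R N] [AddCommGroup P] [Module R P]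
  {π : R} {f : M →ₗ[R] N} {g : N →ₗ[R] P}

theorem exists_eq_add_smul_of_mem_ker (hgf : ∀ x, g (f x) = 0)
    (hP : ∀ z : P, π • z = 0 → z = 0)
    (hmod : ∀ ω : N, (∃ z, g ω = π • z) → ∃ (η : M) (ξ : N), ω = f η + π • ξ)
    {ω : N} (hω : g ω = 0) : ∃ (η : M) (ξ : N), ω = f η + π • ξ ∧ g ξ = 0 := by
  obtain ⟨η, ξ, rfl⟩ := hmod ω ⟨0, by rw [hω, smul_zero]⟩
  refine ⟨η, ξ, rfl, hP _ ?_⟩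
  simpa only [map_add, map_smul, hgf, zero_add] using hω

theorem surjective_codRestrict_ker_of_mod [IsPrecomplete (Ideal.span {π}) M]
    [IsHausdorff (Ideal.span {π}) N] (hgf : ∀ x, g (f x) = 0)
    (hP : ∀ z : P, π • z = 0 → z = 0)
    (hmod : ∀ ω : N, (∃ z, g ω = π • z) → ∃ (η : M) (ξ : N), ω = f η + π • ξ) :
    Function.Surjective (f.codRestrict (LinearMap.ker g) hgf) := by
  have : IsHausdorff (Ideal.span {π}) (LinearMap.ker g) :=
    .of_injective (LinearMap.ker g).injective_subtype
  refine surjective_of_mkQ_comp_surjective (I := Ideal.span {π}) ?_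
  rintro ⟨y, hy⟩
  obtain ⟨η, ξ, rfl, hξ⟩ := exists_eq_add_smul_of_mem_ker hgf hP hmod hy
  refine ⟨η, (Submodule.Quotient.eq _).mpr ?_⟩
  have : f.codRestrict _ hgf η - ⟨f η + π • ξ, hy⟩ = -(π • ⟨ξ, hξ⟩ : LinearMap.ker g) :=
    Subtype.ext (sub_add_cancel_left (f η) (π • ξ))
  rw [this]
  exact neg_mem (smul_mem_smul (Ideal.mem_span_singleton_self π) mem_top)

end ThreeTermComplex

theorem stmt3_general
    (O : Type) [CommRing O]
    (π : O)
    (C : ℤ → Type) [∀ i, AddCommGroup (C i)] [∀ i, Module O (C i)]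
    (d : ∀ i, C i →ₗ[O] C (i + 1))
    (hdd : ∀ i (x : C i), d (i + 1) (d i x) = 0)
    (hflat : ∀ i (x : C i), π • x = 0 → x = 0)
    [∀ i, IsAdicComplete (Ideal.span {π}) (C i)]
    (i : ℤ)
    (hHbar : ∀ ω : C (i + 1), (∃ z, d (i + 1) ω = π • z) →
      ∃ (η : C i) (ξ : C (i + 1)), ω = d i η + π • ξ) :
    ∀ ω : C (i + 1), d (i + 1) ω = 0 → ∃ η : C i, ω = d i η :=
  fun ω hω ↦
    have ⟨η, hη⟩ := surjective_codRestrict_ker_of_mod (hdd i) (hflat _) hHbar ⟨ω, hω⟩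
    ⟨η, congrArg Subtype.val hη.symm⟩

/-- Let `O` be a complete discrete valuation ring with uniformizer `π`, and let
`(C^•, d)` be a cochain complex of flat (π-torsion-free), separated, π-adically
complete `O`-modules.  If `H^{i+1}(C̄^•) = 0`, where `C̄^• = C^•/πC^•` (i.e. every
`ω ∈ C^{i+1}` whose coboundary lies in `πC^{i+2}` can be written `ω = dη + πξ`),
then `H^{i+1}(C^•) = 0`: every cocycle of `C^{i+1}` is a coboundary. -/
theorem stmt3
    (O : Type) [CommRing O] [IsDomain O] [IsDiscreteValuationRing O]
    (π : O) (hπ : Irreducible π)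
    [IsAdicComplete (Ideal.span {π}) O]
    (C : ℤ → Type) [∀ i, AddCommGroup (C i)] [∀ i, Module O (C i)]
    (d : ∀ i, C i →ₗ[O] C (i + 1))
    (hdd : ∀ i (x : C i), d (i + 1) (d i x) = 0)
    (hflat : ∀ i (x : C i), π • x = 0 → x = 0)
    [∀ i, IsAdicComplete (Ideal.span {π}) (C i)]
    (i : ℤ)
    (hHbar : ∀ ω : C (i + 1), (∃ z, d (i + 1) ω = π • z) →
      ∃ (η : C i) (ξ : C (i + 1)), ω = d i η + π • ξ) :
    ∀ ω : C (i + 1), d (i + 1) ω = 0 → ∃ η : C i, ω = d i η :=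
  stmt3_general O π C d hdd hflat i hHbar
end

section
/- Let O be a complete discrete valuation ring with uniformizer π, and C^• a cochain complex of flat, separated, π-adically complete O-modules. If ω ∈ C^i satisfies ∂(ω) = 0 and its reduction ω̄ ∈ C̄^i satisfies ω̄ = ∂̄(η) for some η ∈ C̄^{i-1}, then there exists ξ ∈ C^{i-1} with ∂(ξ) = ω and ξ̄ = η. -/
/-! Successive approximation. Write `ω - dη = π^n ζ`. Since `π` is regular on `C^{i+2}`
and `dω = 0`, the error `ζ` is a cocycle, so by the vanishing of `H^{i+1}(C̄^•)` it is
`dη' + πξ'`; replacing `η` by `η + π^n η'` pushes the error into `π^{n+1} C^{i+1}`. The corrections form a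
`π`-adic Cauchy sequence in `C^i`, whose limit is the required `ξ`: completeness of `C^i`
gives the limit and separatedness of `C^{i+1}` gives `dξ = ω`. -/

theorem Ideal.smodEq_span_singleton_pow_smul_top_iff {R M : Type*} [CommRing R]
    [AddCommGroup M] [Module R M] (r : R) (n : ℕ) (x y : M) :
    x ≡ y [SMOD (Ideal.span {r} ^ n • ⊤ : Submodule R M)] ↔ ∃ z, x - y = r ^ n • z := by
  rw [SModEq.sub_mem, Ideal.span_singleton_pow, Submodule.ideal_span_singleton_smul,
    Submodule.mem_smul_pointwise_iff_exists]
  simp only [Submodule.mem_top, true_and, eq_comm]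

theorem LinearMap.exists_apply_eq_of_forall_smodEq_pow {R M N : Type*} [CommRing R]
    [AddCommGroup M] [Module R M] [AddCommGroup N] [Module R N] {I : Ideal R}
    [IsPrecomplete I M] [IsHausdorff I N] (f : M →ₗ[R] N) {y : N} {k : ℕ}
    (lift : ∀ n, k ≤ n → ∀ x : M, y ≡ f x [SMOD (I ^ n • ⊤ : Submodule R N)] →
      ∃ x', x' ≡ x [SMOD (I ^ n • ⊤ : Submodule R M)] ∧
        y ≡ f x' [SMOD (I ^ (n + 1) • ⊤ : Submodule R N)])
    {x₀ : M} (hx₀ : y ≡ f x₀ [SMOD (I ^ k • ⊤ : Submodule R N)]) :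
    ∃ x, f x = y ∧ x ≡ x₀ [SMOD (I ^ k • ⊤ : Submodule R M)] := by
  choose! next hnext using lift
  let seq : ℕ → M := fun n => Nat.rec (motive := fun _ => M) x₀ (fun n x => next (k + n) x) n
  have hsolves : ∀ n, y ≡ f (seq n) [SMOD (I ^ (k + n) • ⊤ : Submodule R N)] := by
    intro n
    induction n with
    | zero => exact hx₀
    | succ n ih => exact (hnext (k + n) (by omega) (seq n) ih).2
  have hstep : ∀ n, seq (n + 1) ≡ seq n [SMOD (I ^ (k + n) • ⊤ : Submodule R M)] :=
    fun n => (hnext (k + n) (by omega) (seq n) (hsolves n)).1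
  have hcauchy : AdicCompletion.IsAdicCauchy I M seq :=
    (AdicCompletion.isAdicCauchy_iff I M seq).2 fun n =>
      ((hstep n).mono (Submodule.pow_smul_top_le I M (by omega))).symm
  obtain ⟨x, hx⟩ := IsPrecomplete.prec' seq hcauchy
  refine ⟨x, (IsHausdorff.eq_iff_smodEq (I := I)).2 fun n => ?_, ?_⟩
  · have hfx : f x ≡ f (seq n) [SMOD (I ^ n • ⊤ : Submodule R N)] :=
      ((hx n).symm.map f).mono
        (Submodule.map_le_iff_le_comap.2 (Submodule.smul_top_le_comap_smul_top _ f))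
    exact hfx.trans ((hsolves n).mono (Submodule.pow_smul_top_le I N (by omega))).symm
  · have hstay : ∀ n, seq n ≡ x₀ [SMOD (I ^ k • ⊤ : Submodule R M)] := by
      intro n
      induction n with
      | zero => rfl
      | succ n ih => exact ((hstep n).mono (Submodule.pow_smul_top_le I M (by omega))).trans ih
    exact (hx k).symm.trans (hstay k)

theorem exists_smodEq_pow_succ_of_coboundary_mod {R A B D : Type*} [CommRing R]
    [AddCommGroup A] [Module R A] [AddCommGroup B] [Module R B] [AddCommGroup D] [Module R D]
    {π : R} (hπ : IsSMulRegular D π) {d₀ : A →ₗ[R] B} {d₁ : B →ₗ[R] D}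
    (hd : ∀ a, d₁ (d₀ a) = 0)
    (hH : ∀ z : B, (∃ w, d₁ z = π • w) → ∃ (a : A) (b : B), z = d₀ a + π • b)
    {ω : B} (hω : d₁ ω = 0) (n : ℕ) (s : A)
    (hs : ω ≡ d₀ s [SMOD (Ideal.span {π} ^ n • ⊤ : Submodule R B)]) :
    ∃ s', s' ≡ s [SMOD (Ideal.span {π} ^ n • ⊤ : Submodule R A)] ∧
      ω ≡ d₀ s' [SMOD (Ideal.span {π} ^ (n + 1) • ⊤ : Submodule R B)] := by
  simp only [Ideal.smodEq_span_singleton_pow_smul_top_iff] at hs ⊢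
  obtain ⟨ζ, hζ⟩ := hs
  have hcocycle : d₁ ζ = 0 := (hπ.pow n).right_eq_zero_of_smul <| by
    rw [← map_smul, ← hζ, map_sub, hω, hd, sub_zero]
  obtain ⟨a, b, rfl⟩ := hH ζ ⟨0, by rw [hcocycle, smul_zero]⟩
  refine ⟨s + π ^ n • a, ⟨a, add_sub_cancel_left s _⟩, b, ?_⟩
  rw [map_add, map_smul, ← sub_sub, hζ, smul_add, pow_succ, mul_smul]
  abel

theorem stmt4_general
    (O : Type) [CommRing O]
    (π : O)
    (C : ℤ → Type) [∀ i, AddCommGroup (C i)] [∀ i, Module O (C i)]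
    (d : ∀ i, C i →ₗ[O] C (i + 1))
    (hdd : ∀ i (x : C i), d (i + 1) (d i x) = 0)
    (hflat : ∀ i (x : C i), π • x = 0 → x = 0)
    [∀ i, IsAdicComplete (Ideal.span {π}) (C i)]
    (i : ℤ)
    (hHbar : ∀ ω : C (i + 1), (∃ z, d (i + 1) ω = π • z) →
      ∃ (η : C i) (ξ : C (i + 1)), ω = d i η + π • ξ)
    (ω : C (i + 1)) (hω : d (i + 1) ω = 0)
    (η : C i) (hη : ∃ ζ : C (i + 1), ω - d i η = π • ζ) :
    ∃ ξ : C i, d i ξ = ω ∧ ∃ ζ : C i, ξ - η = π • ζ := by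
  have hreg : IsSMulRegular (C (i + 1 + 1)) π :=
    IsSMulRegular.of_right_eq_zero_of_smul (hflat _)
  have hη₁ : ω ≡ d i η [SMOD (Ideal.span {π} ^ 1 • ⊤ : Submodule O (C (i + 1)))] := by
    rw [Ideal.smodEq_span_singleton_pow_smul_top_iff, pow_one]
    exact hη
  obtain ⟨ξ, hdξ, hξ⟩ := (d i).exists_apply_eq_of_forall_smodEq_pow
    (fun n _ => exists_smodEq_pow_succ_of_coboundary_mod hreg (hdd i) hHbar hω n) hη₁
  refine ⟨ξ, hdξ, ?_⟩
  rwa [Ideal.smodEq_span_singleton_pow_smul_top_iff, pow_one] at hξ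

/-- Let `O` be a complete discrete valuation ring with uniformizer `π`, and let
`(C^•, d)` be a cochain complex of flat, separated, π-adically complete `O`-modules,
with `H^{i+1}(C̄^•) = 0` for the mod-π reduction `C̄^•` (the setting of the previous
lifting proposition).  If `ω ∈ C^{i+1}` satisfies `dω = 0` and its reduction is a
coboundary, `ω̄ = d̄ η̄` (i.e. `ω - dη ∈ πC^{i+1}`), then there exists `ξ ∈ C^i` with
`dξ = ω` and `ξ̄ = η̄` (i.e. `ξ - η ∈ πC^i`). -/
theorem stmt4
    (O : Type) [CommRing O] [IsDomain O] [IsDiscreteValuationRing O]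
    (π : O) (hπ : Irreducible π)
    [IsAdicComplete (Ideal.span {π}) O]
    (C : ℤ → Type) [∀ i, AddCommGroup (C i)] [∀ i, Module O (C i)]
    (d : ∀ i, C i →ₗ[O] C (i + 1))
    (hdd : ∀ i (x : C i), d (i + 1) (d i x) = 0)
    (hflat : ∀ i (x : C i), π • x = 0 → x = 0)
    [∀ i, IsAdicComplete (Ideal.span {π}) (C i)]
    (i : ℤ)
    (hHbar : ∀ ω : C (i + 1), (∃ z, d (i + 1) ω = π • z) →
      ∃ (η : C i) (ξ : C (i + 1)), ω = d i η + π • ξ)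
    (ω : C (i + 1)) (hω : d (i + 1) ω = 0)
    (η : C i) (hη : ∃ ζ : C (i + 1), ω - d i η = π • ζ) :
    ∃ ξ : C i, d i ξ = ω ∧ ∃ ζ : C i, ξ - η = π • ζ :=
  stmt4_general O π C d hdd hflat i hHbar ω hω η hη
end

section
/- Let O be a complete discrete valuation ring with uniformizer π and residue field k, and C^• a complex of flat, separated, π-adically complete O-modules. Suppose H^i(C̄^•) has finite dimension d over k and that multiplication by π is injective on H^i(C^•) and on H^{i+1}(C^•). Then H^i(C^•) is a free O-module of rank d. Moreover, if ξ_1,…,ξ_d ∈ C^i satisfy ∂(ξ_j)=0 and the classes [ξ̄_1],…,[ξ̄_d] form a basis of H^i(C̄^•), then [ξ_1],…,[ξ_d] form an O-basis of H^i(C^•). -/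
/-!
Every cocycle `ω ∈ C^{i+1}` is, modulo `π`, a combination of the `ξ_j` plus a coboundary:
`ω = ∑ c_j ξ_j + ∂η + π ζ`, and `ζ` is again a cocycle because `C^{i+2}` has no `π`-torsion.
Iterating on `ζ` and summing the resulting `π`-adic series in the complete modules `O` and `C^i`
writes `ω` exactly as `∑ c_j ξ_j + ∂η`. Conversely, if `∑ c_j [ξ_j] = 0` in `H^{i+1}`, then
independence mod `π` makes every `c_j` divisible by `π`, and since `π` is injective on `H^{i+1}`
we may divide and repeat; so each `c_j` lies in `⋂ πⁿ O = 0`.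
-/

open Finset

section PiAdic

variable {O M : Type*} [CommRing O] [AddCommGroup M] [Module O M] (π : O)

theorem mem_span_singleton_pow_smul_top_iff {n : ℕ} {x : M} :
    x ∈ Ideal.span {π} ^ n • (⊤ : Submodule O M) ↔ ∃ y, x = π ^ n • y := by
  rw [Ideal.span_singleton_pow, Submodule.ideal_span_singleton_smul, ← SetLike.mem_coe,
    Submodule.coe_pointwise_smul]
  constructor
  · rintro ⟨y, -, rfl⟩
    exact ⟨y, rfl⟩
  · rintro ⟨y, rfl⟩
    exact ⟨y, trivial, rfl⟩

theorem IsHausdorff.eq_zero_of_forall_eq_pow_smul [IsHausdorff (Ideal.span {π}) M] {x : M}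
    (h : ∀ n : ℕ, ∃ y, x = π ^ n • y) : x = 0 :=
  IsHausdorff.haus ‹_› x fun n =>
    SModEq.zero.mpr ((mem_span_singleton_pow_smul_top_iff π).mpr (h n))

theorem IsPrecomplete.exists_sub_sum_pow_smul_eq [IsPrecomplete (Ideal.span {π}) M] (f : ℕ → M) :
    ∃ L : M, ∀ n : ℕ, ∃ y, L - ∑ k ∈ range n, π ^ k • f k = π ^ n • y := by
  have hcauchy : ∀ {m n : ℕ}, m ≤ n →
      ∑ k ∈ range m, π ^ k • f k ≡ ∑ k ∈ range n, π ^ k • f k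
        [SMOD Ideal.span {π} ^ m • (⊤ : Submodule O M)] := by
    intro m n hmn
    rw [SModEq.sub_mem, ← sum_range_add_sum_Ico _ hmn, sub_add_cancel_left,
      mem_span_singleton_pow_smul_top_iff]
    refine ⟨-∑ k ∈ Ico m n, π ^ (k - m) • f k, ?_⟩
    rw [smul_neg, neg_inj, smul_sum]
    refine sum_congr rfl fun k hk => ?_
    rw [smul_smul, ← pow_add, Nat.add_sub_cancel' (mem_Ico.mp hk).1]
  obtain ⟨L, hL⟩ := IsPrecomplete.prec ‹_› hcauchy
  exact ⟨L, fun n => (mem_span_singleton_pow_smul_top_iff π).mp (SModEq.sub_mem.mp (hL n).symm)⟩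

theorem IsPrecomplete.exists_sub_sum_pow_smul_eq_pi [IsPrecomplete (Ideal.span {π}) M] {ι : Type*}
    (f : ℕ → ι → M) :
    ∃ L : ι → M, ∀ n : ℕ, ∃ y, L - ∑ k ∈ range n, π ^ k • f k = π ^ n • y := by
  choose L y hy using fun i => exists_sub_sum_pow_smul_eq π fun k => f k i
  exact ⟨L, fun n => ⟨fun i => y i n, funext fun i => by simpa [Finset.sum_apply] using hy i n⟩⟩

theorem le_range_of_forall_eq_add_smul {ι A B : Type*} [AddCommGroup A] [Module O A]
    [AddCommGroup B] [Module O B] [IsPrecomplete (Ideal.span {π}) O]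
    [IsPrecomplete (Ideal.span {π}) A] [IsHausdorff (Ideal.span {π}) B]
    (φ : (ι → O) × A →ₗ[O] B) (K : Submodule O B)
    (hK : ∀ z : K, ∃ (p : (ι → O) × A) (z' : K), (z : B) = φ p + π • (z' : B)) :
    K ≤ LinearMap.range φ := by
  intro z hz
  choose p next hnext using hK
  let seq : ℕ → K := fun n => next^[n] ⟨z, hz⟩
  have hpartial : ∀ N, z = φ (∑ k ∈ range N, π ^ k • p (seq k)) + π ^ N • (seq N : B) := by
    intro N
    induction N with
    | zero => simp [seq]
    | succ N ih =>
      have hseq : seq (N + 1) = next (seq N) := Function.iterate_succ_apply' _ _ _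
      rw [ih, hnext (seq N), hseq, sum_range_succ, map_add, map_smul, smul_add, smul_smul,
        ← pow_succ]
      abel
  obtain ⟨L₁, hL₁⟩ := IsPrecomplete.exists_sub_sum_pow_smul_eq_pi π fun k => (p (seq k)).1
  obtain ⟨L₂, hL₂⟩ := IsPrecomplete.exists_sub_sum_pow_smul_eq π fun k => (p (seq k)).2
  refine ⟨(L₁, L₂), sub_eq_zero.mp (IsHausdorff.eq_zero_of_forall_eq_pow_smul π fun n => ?_)⟩
  obtain ⟨y₁, hy₁⟩ := hL₁ n
  obtain ⟨y₂, hy₂⟩ := hL₂ n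
  have hL : (L₁, L₂) = ∑ k ∈ range n, π ^ k • p (seq k) + π ^ n • (y₁, y₂) := by
    refine Prod.ext ?_ ?_
    · simp [Prod.fst_sum, ← hy₁]
    · simp [Prod.snd_sum, ← hy₂]
  refine ⟨φ (y₁, y₂) - seq n, ?_⟩
  rw [hL, map_add, map_smul, smul_sub, hpartial n]
  abel

theorem linearIndependent_of_sum_smul_eq_zero_dvd {ι Q : Type*} [Fintype ι] [AddCommGroup Q]
    [Module O Q] [IsHausdorff (Ideal.span {π}) O] {v : ι → Q}
    (htors : ∀ q : Q, π • q = 0 → q = 0)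
    (hdvd : ∀ c : ι → O, ∑ j, c j • v j = 0 → ∀ j, π ∣ c j) : LinearIndependent O v := by
  have hpow : ∀ (n : ℕ) (c : ι → O), ∑ j, c j • v j = 0 → ∀ j, π ^ n ∣ c j := by
    intro n
    induction n with
    | zero => simp
    | succ n ih =>
      intro c hc j
      choose c' hc' using hdvd c hc
      have hc'v : ∑ j, c' j • v j = 0 := by
        refine htors _ ?_
        simpa only [smul_sum, smul_smul, ← hc'] using hc
      rw [hc' j, pow_succ']
      exact mul_dvd_mul_left π (ih c' hc'v j)
  refine Fintype.linearIndependent_iff.mpr fun c hc j =>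
    IsHausdorff.eq_zero_of_forall_eq_pow_smul π fun n => ?_
  obtain ⟨y, hy⟩ := hpow n c hc j
  exact ⟨y, hy⟩

end PiAdic

section

variable {O A B D : Type*} [CommRing O] [AddCommGroup A] [Module O A] [AddCommGroup B]
  [Module O B] [AddCommGroup D] [Module O D]

abbrev Cohomology (f : A →ₗ[O] B) (g : B →ₗ[O] D) : Type _ :=
  LinearMap.ker g ⧸ Submodule.comap (LinearMap.ker g).subtype (LinearMap.range f)

namespace Cohomology

variable {f : A →ₗ[O] B} {g : B →ₗ[O] D}

theorem mk_eq_zero_iff (x : LinearMap.ker g) :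
    (Submodule.Quotient.mk x : Cohomology f g) = 0 ↔ ∃ η, f η = x :=
  Submodule.Quotient.mk_eq_zero _

theorem eq_zero_of_smul_eq_zero {π : O}
    (hinj : ∀ ω, g ω = 0 → (∃ η, π • ω = f η) → ∃ η, ω = f η)
    (x : Cohomology f g) (hx : π • x = 0) : x = 0 := by
  obtain ⟨⟨ω, hω⟩, rfl⟩ := Submodule.Quotient.mk_surjective _ x
  rw [← Submodule.Quotient.mk_smul, mk_eq_zero_iff] at hx
  obtain ⟨η, hη⟩ := hx
  obtain ⟨η', hη'⟩ := hinj ω hω ⟨η, hη.symm⟩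
  exact (mk_eq_zero_iff _).mpr ⟨η', hη'.symm⟩

variable {ι : Type*} [Fintype ι] {ξ : ι → B}

theorem sum_smul_mk (hξ : ∀ j, g (ξ j) = 0) (c : ι → O) :
    ∑ j, c j • (Submodule.Quotient.mk ⟨ξ j, hξ j⟩ : Cohomology f g) =
      Submodule.Quotient.mk ⟨∑ j, c j • ξ j, by simp [hξ]⟩ := by
  simp only [← Submodule.mkQ_apply, ← map_smul, ← map_sum]
  congr 1
  ext
  simp

theorem linearIndependent_mk (π : O) [IsHausdorff (Ideal.span {π}) O]
    (hξ : ∀ j, g (ξ j) = 0) (hinj : ∀ ω, g ω = 0 → (∃ η, π • ω = f η) → ∃ η, ω = f η)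
    (hdvd : ∀ c : ι → O, (∃ η, ∑ j, c j • ξ j = f η) → ∀ j, π ∣ c j) :
    LinearIndependent O fun j => (Submodule.Quotient.mk ⟨ξ j, hξ j⟩ : Cohomology f g) := by
  refine linearIndependent_of_sum_smul_eq_zero_dvd π (eq_zero_of_smul_eq_zero hinj) fun c hc => ?_
  rw [sum_smul_mk hξ, mk_eq_zero_iff] at hc
  obtain ⟨η, hη⟩ := hc
  exact hdvd c ⟨η, hη.symm⟩

theorem top_le_span_range_mk (hξ : ∀ j, g (ξ j) = 0)
    (hcover : LinearMap.ker g ≤ LinearMap.range ((Fintype.linearCombination O ξ).coprod f)) :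
    ⊤ ≤ Submodule.span O
      (Set.range fun j => (Submodule.Quotient.mk ⟨ξ j, hξ j⟩ : Cohomology f g)) := by
  rintro x -
  obtain ⟨⟨ω, hω⟩, rfl⟩ := Submodule.Quotient.mk_surjective _ x
  obtain ⟨⟨c, η⟩, hcη⟩ := hcover hω
  rw [LinearMap.coprod_apply, Fintype.linearCombination_apply] at hcη
  refine (Submodule.mem_span_range_iff_exists_fun O).mpr ⟨c, ?_⟩
  rw [sum_smul_mk, ← sub_eq_zero, ← Submodule.Quotient.mk_sub, mk_eq_zero_iff]
  exact ⟨-η, by simp [← hcη]⟩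

end Cohomology

end

theorem stmt5_general
    (O : Type) [CommRing O]
    (π : O)
    [IsAdicComplete (Ideal.span {π}) O]
    (C : ℤ → Type) [∀ i, AddCommGroup (C i)] [∀ i, Module O (C i)]
    (d : ∀ i, C i →ₗ[O] C (i + 1))
    (hdd : ∀ i (x : C i), d (i + 1) (d i x) = 0)
    (hflat : ∀ i (x : C i), π • x = 0 → x = 0)
    [∀ i, IsAdicComplete (Ideal.span {π}) (C i)]
    (i : ℤ) (dd : ℕ) (ξ : Fin dd → C (i + 1))
    (hξ : ∀ j, d (i + 1) (ξ j) = 0)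
    -- the reductions `[ξ̄_j]` span `H^{i+1}(C̄^•)`:
    (hspan : ∀ ω : C (i + 1), (∃ z, d (i + 1) ω = π • z) →
      ∃ (c : Fin dd → O) (η : C i) (ζ : C (i + 1)),
        ω = ∑ j, c j • ξ j + d i η + π • ζ)
    -- the reductions `[ξ̄_j]` are linearly independent over `k` in `H^{i+1}(C̄^•)`:
    (hindep : ∀ c : Fin dd → O,
      (∃ (η : C i) (ζ : C (i + 1)), ∑ j, c j • ξ j = d i η + π • ζ) →
        ∀ j, π ∣ c j)
    -- multiplication by `π` is injective on `H^{i+1}(C^•)`: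
    (hinj₁ : ∀ ω : C (i + 1), d (i + 1) ω = 0 → (∃ η : C i, π • ω = d i η) →
      ∃ η : C i, ω = d i η) :
    ∃ b : Module.Basis (Fin dd) O
      (↥(LinearMap.ker (d (i + 1))) ⧸
        (Submodule.comap (LinearMap.ker (d (i + 1))).subtype (LinearMap.range (d i)))),
      ∀ j, b j = Submodule.Quotient.mk ⟨ξ j, LinearMap.mem_ker.mpr (hξ j)⟩ := by
  have hstep : ∀ z : LinearMap.ker (d (i + 1)), ∃ (p : (Fin dd → O) × C i)
      (z' : LinearMap.ker (d (i + 1))),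
      (z : C (i + 1)) = (Fintype.linearCombination O ξ).coprod (d i) p + π • (z' : C (i + 1)) := by
    rintro ⟨ω, hω⟩
    obtain ⟨c, η, ζ, rfl⟩ := hspan ω ⟨0, by rw [LinearMap.mem_ker.mp hω, smul_zero]⟩
    have hζ : d (i + 1) ζ = 0 := hflat _ _ (by simpa [map_sum, hξ, hdd] using hω)
    exact ⟨(c, η), ⟨ζ, hζ⟩, by simp [Fintype.linearCombination_apply]⟩
  have hli := Cohomology.linearIndependent_mk (f := d i) π hξ hinj₁ fun c ⟨η, hη⟩ =>
    hindep c ⟨η, 0, by rw [hη, smul_zero, add_zero]⟩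
  have hsp := Cohomology.top_le_span_range_mk (f := d i) hξ
    (le_range_of_forall_eq_add_smul π _ _ hstep)
  exact ⟨.mk hli hsp, Module.Basis.mk_apply hli hsp⟩

/-- Let `O` be a complete discrete valuation ring with uniformizer `π` and residue field
`k = O/π`, and `(C^•, d)` a complex of flat, separated, π-adically complete `O`-modules.
Suppose `H^{i+1}(C̄^•)` has finite dimension `dd` over `k`, with basis the classes of the
reductions of cocycles `ξ_1, …, ξ_dd ∈ C^{i+1}` (spanning and mod-π independence below),
and that multiplication by `π` is injective on `H^{i+1}(C^•)` and on `H^{i+2}(C^•)`.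
Then `H^{i+1}(C^•)` is a free `O`-module of rank `dd`, and the classes
`[ξ_1], …, [ξ_dd]` form an `O`-basis of `H^{i+1}(C^•)`. -/
theorem stmt5
    (O : Type) [CommRing O] [IsDomain O] [IsDiscreteValuationRing O]
    (π : O) (hπ : Irreducible π)
    [IsAdicComplete (Ideal.span {π}) O]
    (C : ℤ → Type) [∀ i, AddCommGroup (C i)] [∀ i, Module O (C i)]
    (d : ∀ i, C i →ₗ[O] C (i + 1))
    (hdd : ∀ i (x : C i), d (i + 1) (d i x) = 0)
    (hflat : ∀ i (x : C i), π • x = 0 → x = 0)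
    [∀ i, IsAdicComplete (Ideal.span {π}) (C i)]
    (i : ℤ) (dd : ℕ) (ξ : Fin dd → C (i + 1))
    (hξ : ∀ j, d (i + 1) (ξ j) = 0)
    -- the reductions `[ξ̄_j]` span `H^{i+1}(C̄^•)`:
    (hspan : ∀ ω : C (i + 1), (∃ z, d (i + 1) ω = π • z) →
      ∃ (c : Fin dd → O) (η : C i) (ζ : C (i + 1)),
        ω = ∑ j, c j • ξ j + d i η + π • ζ)
    -- the reductions `[ξ̄_j]` are linearly independent over `k` in `H^{i+1}(C̄^•)`:
    (hindep : ∀ c : Fin dd → O,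
      (∃ (η : C i) (ζ : C (i + 1)), ∑ j, c j • ξ j = d i η + π • ζ) →
        ∀ j, π ∣ c j)
    -- multiplication by `π` is injective on `H^{i+1}(C^•)`:
    (hinj₁ : ∀ ω : C (i + 1), d (i + 1) ω = 0 → (∃ η : C i, π • ω = d i η) →
      ∃ η : C i, ω = d i η)
    -- multiplication by `π` is injective on `H^{i+2}(C^•)`:
    (hinj₂ : ∀ ω : C (i + 1 + 1), d (i + 1 + 1) ω = 0 →
      (∃ η : C (i + 1), π • ω = d (i + 1) η) → ∃ η : C (i + 1), ω = d (i + 1) η) :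
    ∃ b : Module.Basis (Fin dd) O
      (↥(LinearMap.ker (d (i + 1))) ⧸
        (Submodule.comap (LinearMap.ker (d (i + 1))).subtype (LinearMap.range (d i)))),
      ∀ j, b j = Submodule.Quotient.mk ⟨ξ j, LinearMap.mem_ker.mpr (hξ j)⟩ :=
  stmt5_general O π C d hdd hflat i dd ξ hξ hspan hindep hinj₁
end

section
/- In the setting of the previous proposition, if ξ ∈ D^i satisfies ∂(ξ) = 0 and ξ ∈ π^s C^i, then in H^i(D^•) one has [ξ] = ∑_{k=1}^d c_k [ξ_k] with all coefficients c_k ∈ π^s O. -/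
/-!
Rescaling by `π^{-s}` puts `ω` into `C^{i+1}`, where it is an `O`-combination of the `ξ_k` and
the `η_l` up to a boundary of `C^•`. Over the field `Λ` every torsion class `[η_l]` dies, since
`π^t η_l = ∂ζ` gives `η_l = ∂(π^{-t} ζ)`; scaling back by `π^s` leaves only the `ξ_k`, with
coefficients in `π^s O`.
-/

section FieldCoefficients

variable {K M N : Type*} [Field K] [AddCommGroup M] [Module K M] [AddCommGroup N] [Module K N]

theorem LinearMap.exists_eq_sum_smul_add_of_smul_sub_mem_range {ι : Type*} [Fintype ι]
    (f : N →ₗ[K] M) {u : K} (hu : u ≠ 0) (c : ι → K) (ξ : ι → M) {ω : M}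
    (h : u • ω - ∑ k, c k • ξ k ∈ LinearMap.range f) :
    ∃ ζ : N, ω = ∑ k, (u⁻¹ * c k) • ξ k + f ζ := by
  obtain ⟨ζ, hζ⟩ := h
  refine ⟨u⁻¹ • ζ, ?_⟩
  rw [map_smul, hζ, smul_sub, inv_smul_smul₀ hu, Finset.smul_sum]
  simp only [smul_smul, add_sub_cancel]

theorem LinearMap.mem_range_of_algebraMap_smul_mem_range {R : Type*} [CommSemiring R]
    [Algebra R K] [Module R M] [IsScalarTower R K M] (f : N →ₗ[K] M) {r : R}
    (hr : algebraMap R K r ≠ 0) {y : M} (h : r • y ∈ LinearMap.range f) :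
    y ∈ LinearMap.range f := by
  rwa [← algebraMap_smul K, Submodule.smul_mem_iff _ hr] at h

end FieldCoefficients

theorem stmt8_general
    (O : Type) [CommRing O]
    (π : O) (hπ : Irreducible π)
    (Λ : Type) [Field Λ] [Algebra O Λ] [IsFractionRing O Λ]
    (D : ℤ → Type) [∀ i, AddCommGroup (D i)] [∀ i, Module Λ (D i)]
    [∀ i, Module O (D i)] [∀ i, IsScalarTower O Λ (D i)]
    (dD : ∀ i, D i →ₗ[Λ] D (i + 1))
    (C : ∀ i, Submodule O (D i))
    (i : ℤ) (dd e : ℕ)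
    (ξ : Fin dd → D (i + 1))
    (η : Fin e → D (i + 1))
    -- the classes of the `ξ_k` and `η_l` span `H^{i+1}(C^•)` over `O`:
    (hspan : ∀ ω ∈ C (i + 1), dD (i + 1) ω = 0 →
      ∃ (c : Fin dd → O) (c' : Fin e → O) (ζ : D i), ζ ∈ C i ∧
        ω = ∑ k, c k • ξ k + ∑ l, c' l • η l + dD i ζ)
    -- the classes `[η_l]` are torsion:
    (htors : ∀ l, ∃ (t : ℕ), ∃ ζ ∈ C i, (π ^ t : O) • η l = dD i ζ)
    (s : ℤ) (ω : D (i + 1)) (hω : dD (i + 1) ω = 0)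
    (hωC : ((algebraMap O Λ π) ^ (-s) : Λ) • ω ∈ C (i + 1)) :
    ∃ (a : Fin dd → Λ) (ζ : D i),
      ω = ∑ k, a k • ξ k + dD i ζ ∧
      ∀ k, ∃ c : O, a k = ((algebraMap O Λ π) ^ s : Λ) * algebraMap O Λ c := by
  set p : Λ := algebraMap O Λ π
  have hp : p ≠ 0 := (map_ne_zero_iff _ (IsFractionRing.injective O Λ)).mpr hπ.ne_zero
  obtain ⟨c, c', ζ, -, hc⟩ := hspan _ hωC (by rw [map_smul, hω, smul_zero])
  have hη : ∀ l, η l ∈ LinearMap.range (dD i) := fun l => by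
    obtain ⟨t, ζ, -, hζ⟩ := htors l
    exact (dD i).mem_range_of_algebraMap_smul_mem_range (by rw [map_pow]; exact pow_ne_zero t hp)
      ⟨ζ, hζ.symm⟩
  have hbdry : p ^ (-s) • ω - ∑ k, algebraMap O Λ (c k) • ξ k ∈ LinearMap.range (dD i) := by
    simp only [hc, algebraMap_smul, add_assoc, add_sub_cancel_left]
    exact add_mem (Submodule.sum_mem _ fun l _ => Submodule.smul_of_tower_mem _ _ (hη l))
      ⟨ζ, rfl⟩
  obtain ⟨ζ, hζ⟩ := (dD i).exists_eq_sum_smul_add_of_smul_sub_mem_range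
    (zpow_ne_zero _ hp) _ ξ hbdry
  exact ⟨_, ζ, hζ, fun k => ⟨c k, by rw [zpow_neg, inv_inv]⟩⟩

/-- In the setting of the previous proposition (`H^{i+1}(C^•)` = free with basis
`[ξ_1], …, [ξ_dd]` ⊕ torsion, `D^• = ⋃_s π^s C^•`): if `ξ ∈ D^{i+1}` satisfies
`dξ = 0` and `ξ ∈ π^s C^{i+1}` (i.e. `π^{-s} ξ ∈ C^{i+1}`, `s ∈ ℤ`), then in
`H^{i+1}(D^•)` one has `[ξ] = ∑_k c_k [ξ_k]` with all coefficients `c_k ∈ π^s O`. -/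
theorem stmt8
    (O : Type) [CommRing O] [IsDomain O] [IsDiscreteValuationRing O]
    (π : O) (hπ : Irreducible π)
    [IsAdicComplete (Ideal.span {π}) O]
    (Λ : Type) [Field Λ] [Algebra O Λ] [IsFractionRing O Λ]
    (D : ℤ → Type) [∀ i, AddCommGroup (D i)] [∀ i, Module Λ (D i)]
    [∀ i, Module O (D i)] [∀ i, IsScalarTower O Λ (D i)]
    (dD : ∀ i, D i →ₗ[Λ] D (i + 1))
    (hdd : ∀ i (x : D i), dD (i + 1) (dD i x) = 0)
    (C : ∀ i, Submodule O (D i))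
    (hCd : ∀ i, ∀ x ∈ C i, dD i x ∈ C (i + 1))
    (hunion : ∀ i (x : D i), ∃ s : ℕ, π ^ s • x ∈ C i)
    (i : ℤ) (dd e : ℕ)
    (ξ : Fin dd → D (i + 1)) (hξC : ∀ k, ξ k ∈ C (i + 1))
    (hξd : ∀ k, dD (i + 1) (ξ k) = 0)
    (η : Fin e → D (i + 1)) (hηC : ∀ l, η l ∈ C (i + 1))
    (hηd : ∀ l, dD (i + 1) (η l) = 0)
    -- the classes of the `ξ_k` and `η_l` span `H^{i+1}(C^•)` over `O`:
    (hspan : ∀ ω ∈ C (i + 1), dD (i + 1) ω = 0 →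
      ∃ (c : Fin dd → O) (c' : Fin e → O) (ζ : D i), ζ ∈ C i ∧
        ω = ∑ k, c k • ξ k + ∑ l, c' l • η l + dD i ζ)
    -- `H` is free with basis the `[ξ_k]`, and the sum `H ⊕ H'` is direct:
    (hfree : ∀ (c : Fin dd → O) (c' : Fin e → O),
      (∃ ζ ∈ C i, ∑ k, c k • ξ k + ∑ l, c' l • η l = dD i ζ) → ∀ k, c k = 0)
    -- the classes `[η_l]` are torsion:
    (htors : ∀ l, ∃ (t : ℕ), ∃ ζ ∈ C i, (π ^ t : O) • η l = dD i ζ)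
    (s : ℤ) (ω : D (i + 1)) (hω : dD (i + 1) ω = 0)
    (hωC : ((algebraMap O Λ π) ^ (-s) : Λ) • ω ∈ C (i + 1)) :
    ∃ (a : Fin dd → Λ) (ζ : D i),
      ω = ∑ k, a k • ξ k + dD i ζ ∧
      ∀ k, ∃ c : O, a k = ((algebraMap O Λ π) ^ s : Λ) * algebraMap O Λ c :=
  stmt8_general O π hπ Λ D dD C i dd e ξ η hspan htors s ω hω hωC
end

section
/- Let γ_l = ∑_{i=0}^l γ^{p^i}/p^i, where γ satisfies ∑_{i=0}^∞ γ^{p^i}/p^i = 0 and ord(γ) = 1/(p−1). Then ord(γ_l) ≥ p^{l+1}/(p−1) − l − 1 for all l ≥ 0. -/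
/-- Let `γ_l = ∑_{i=0}^l γ^{p^i}/p^i`, where `γ` (in an ultrametric field `K`, with the
valuation normalized by `ord p = 1`, i.e. `‖x‖ = p^{-ord x}`) satisfies
`∑_{i=0}^∞ γ^{p^i}/p^i = 0` and `ord γ = 1/(p-1)`.  Then
`ord γ_l ≥ p^{l+1}/(p-1) − l − 1` for all `l ≥ 0`, i.e.
`‖γ_l‖ ≤ p^{-(p^{l+1}/(p-1) − l − 1)}`. -/
theorem stmt17 (p : ℕ) (hp : p.Prime)
    (K : Type) [NormedField K] [IsUltrametricDist K] [CharZero K]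
    (hpK : ‖(p : K)‖ = ((p : ℝ))⁻¹)
    (γ : K) (hγ : ‖γ‖ = (p : ℝ) ^ (-(1 / ((p : ℝ) - 1))))
    (hsum : HasSum (fun i : ℕ => γ ^ (p ^ i) / ((p : K) ^ i)) 0) :
    ∀ l : ℕ,
      ‖∑ i ∈ Finset.range (l + 1), γ ^ (p ^ i) / ((p : K) ^ i)‖ ≤
        (p : ℝ) ^ (-(((p : ℝ) ^ (l + 1)) / ((p : ℝ) - 1) - l - 1)) := by
  intro l
  have hp2 : (2:ℝ) ≤ (p:ℝ) := by exact_mod_cast hp.two_le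
  have hp1 : (1:ℝ) < (p:ℝ) := by linarith
  have hp0 : (0:ℝ) < (p:ℝ) := by linarith
  have hps : (0:ℝ) < (p:ℝ) - 1 := by linarith
  set f : ℕ → K := fun i => γ ^ (p ^ i) / ((p : K) ^ i) with hf
  -- norm of each term
  have hnorm : ∀ j : ℕ, ‖f j‖ = (p:ℝ) ^ (-(((p:ℝ)^j) / ((p:ℝ) - 1) - j)) := by
    intro j
    have h1 : ‖f j‖ = ‖γ‖ ^ (p ^ j) * ((p:ℝ))^j := by
      rw [hf]
      simp only [norm_div, norm_pow, hpK]
      rw [div_eq_mul_inv, inv_pow, inv_inv]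
    rw [h1, hγ]
    rw [← Real.rpow_natCast ((p:ℝ) ^ (-(1 / ((p : ℝ) - 1)))) (p ^ j),
      ← Real.rpow_mul hp0.le]
    rw [show ((p:ℝ))^j = (p:ℝ) ^ ((j:ℕ):ℝ) from (Real.rpow_natCast _ j).symm,
      ← Real.rpow_add hp0]
    congr 1
    rw [Real.rpow_natCast]
    push_cast
    field_simp
    ring
  -- the finite sum equals minus the tail
  have hsummable := hsum.summable
  have htail := Summable.sum_add_tsum_nat_add (l + 1) hsummable
  rw [hsum.tsum_eq] at htail
  have hkey : ∑ i ∈ Finset.range (l + 1), f i = -∑' i, f (i + (l + 1)) := by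
    linear_combination htail
  rw [hkey, norm_neg]
  -- bound the tail using ultrametricity
  apply IsUltrametricDist.norm_tsum_le_of_forall_le
  intro i
  rw [hnorm]
  apply Real.rpow_le_rpow_of_exponent_le hp1.le
  rw [neg_le_neg_iff]
  have hP1 : (1:ℝ) ≤ (p:ℝ)^(l+1) := one_le_pow₀ hp1.le
  have hbern : 1 + (i:ℝ) * ((p:ℝ) - 1) ≤ (p:ℝ)^i := by
    have := one_add_mul_le_pow (a := (p:ℝ) - 1) (by linarith) i
    simpa using this
  have key : (p:ℝ)^(l+1) + (i:ℝ)*((p:ℝ)-1) ≤ (p:ℝ)^(i+(l+1)) := by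
    have h3 : (p:ℝ)^(i+(l+1)) = (p:ℝ)^(l+1) * (p:ℝ)^i := by rw [pow_add]; ring
    nlinarith [mul_le_mul_of_nonneg_left hbern (le_trans zero_le_one hP1),
      mul_nonneg (Nat.cast_nonneg i) hps.le]
  have h4 : (p:ℝ)^(l+1)/((p:ℝ)-1) + (i:ℝ) ≤ (p:ℝ)^(i+(l+1))/((p:ℝ)-1) := by
    have h5 := (div_le_div_iff_of_pos_right hps).mpr key
    rwa [add_div, mul_div_cancel_right₀ _ hps.ne'] at h5
  push_cast
  linarith
end

section
/- Let A be an N×N matrix over a complete nonarchimedean valued field with valuation ord, and suppose that for each column index j, all entries of column j have ord ≥ c_j for given real numbers c_j ≥ 0. Then the Newton polygon of det(I − tA) with respect to ord lies on or above the Newton polygon of the polynomial ∏_{j=1}^N (1 − p^{c_j} t), i.e., of the polygon with slopes c_1,…,c_N (where ord(p)=1). -/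
/-!
The `i`-th coefficient of `det (1 - t A)` is the sum of the `i × i` principal minors of `-A`.
In the Leibniz expansion of the minor on the index set `S`, every term takes exactly one entry
from each column `j ∈ S`, so it has valuation at least `∑ j ∈ S, c j`; the ultrametric
inequality carries this bound through both sums.
-/

open Polynomial Finset

namespace AddValuation

section Matrix

variable {R Γ₀ : Type*} [LinearOrderedAddCommMonoidWithTop Γ₀]

theorem map_units_int_smul [Ring R] (w : AddValuation R Γ₀) (u : ℤˣ) (x : R) :
    w (u • x) = w x := by
  rcases Int.units_eq_one_or u with rfl | rfl
  · rw [one_smul]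
  · rw [Units.neg_smul, one_smul, map_neg]

variable [CommRing R] (w : AddValuation R Γ₀)

theorem map_prod {ι : Type*} (s : Finset ι) (f : ι → R) :
    w (∏ i ∈ s, f i) = ∑ i ∈ s, w (f i) := by
  induction s using Finset.cons_induction with
  | empty => simp [map_one]
  | cons a s ha ih => rw [prod_cons, sum_cons, map_mul, ih]

theorem sum_le_map_det {n : Type*} [Fintype n] [DecidableEq n] {M : Matrix n n R} {c : n → Γ₀}
    (hM : ∀ i j, c j ≤ w (M i j)) : ∑ j, c j ≤ w M.det := by
  rw [Matrix.det_apply]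
  refine map_le_sum w fun σ _ => ?_
  rw [map_units_int_smul, map_prod]
  exact sum_le_sum fun j _ => hM (σ j) j

theorem inf_sum_le_map_coeff_charpolyRev {n : Type*} [Fintype n] [DecidableEq n]
    {M : Matrix n n R} {c : n → Γ₀} (hM : ∀ i j, c j ≤ w (M i j)) (k : ℕ) :
    (univ.powersetCard k).inf (fun S => ∑ j ∈ S, c j) ≤ w (M.charpolyRev.coeff k) := by
  have hneg : M.charpolyRev = Matrix.det (1 + (X : R[X]) • (-M).map C) := by
    rw [Matrix.charpolyRev, sub_eq_add_neg, Matrix.map_neg _ (_root_.map_neg C), smul_neg]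
  rw [hneg, Matrix.coeff_det_one_add_X_smul_eq_sum_minors]
  refine map_le_sum w fun S hS => (inf_le hS).trans ?_
  rw [← sum_coe_sort S]
  exact w.sum_le_map_det fun i j => by
    simpa only [Matrix.submatrix_apply, Matrix.neg_apply, map_neg] using hM i j

end Matrix

section OfNeZero

variable {R : Type*} [Ring R] [IsDomain R]

open Classical in
noncomputable def ofNeZero (v : R → ℝ)
    (hv_mul : ∀ x y : R, x ≠ 0 → y ≠ 0 → v (x * y) = v x + v y)
    (hv_add : ∀ x y : R, x ≠ 0 → y ≠ 0 → x + y ≠ 0 → min (v x) (v y) ≤ v (x + y)) :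
    AddValuation R (WithTop ℝ) :=
  AddValuation.of (fun x => if x = 0 then ⊤ else (v x : WithTop ℝ)) (if_pos rfl)
    (by
      have h := hv_mul 1 1 one_ne_zero one_ne_zero
      rw [mul_one, left_eq_add] at h
      rw [if_neg one_ne_zero, h, WithTop.coe_zero])
    (fun x y => by
      by_cases hx : x = 0
      · simp [hx]
      by_cases hy : y = 0
      · simp [hy]
      by_cases hxy : x + y = 0
      · simp [hxy]
      simp only [if_neg hx, if_neg hy, if_neg hxy, ← WithTop.coe_min, WithTop.coe_le_coe]
      exact hv_add x y hx hy hxy)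
    (fun x y => by
      by_cases hx : x = 0
      · simp [hx]
      by_cases hy : y = 0
      · simp [hy]
      rw [if_neg (mul_ne_zero hx hy), if_neg hx, if_neg hy, hv_mul x y hx hy, WithTop.coe_add])

variable {v : R → ℝ} {hv_mul hv_add}

theorem ofNeZero_apply_of_ne_zero {x : R} (hx : x ≠ 0) :
    ofNeZero v hv_mul hv_add x = v x := by
  simp [ofNeZero, hx]

theorem coe_le_ofNeZero {b : ℝ} {x : R} (h : x ≠ 0 → b ≤ v x) :
    (b : WithTop ℝ) ≤ ofNeZero v hv_mul hv_add x := by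
  by_cases hx : x = 0
  · simp [ofNeZero, hx]
  · rw [ofNeZero_apply_of_ne_zero hx]
    exact WithTop.coe_le_coe.mpr (h hx)

end OfNeZero

end AddValuation

/-- Let `A` be an `N×N` matrix over a field with a (rank-one) valuation `ord = v`, and
suppose each entry of column `j` has `v ≥ c_j`, with `c_j ≥ 0`.  Then the Newton
polygon of `det(I − tA)` with respect to `v` lies on or above the polygon with slopes
`c_1, …, c_N` (the Newton polygon of `∏_j (1 − p^{c_j} t)` when `v(p) = 1`):
equivalently, since that comparison polygon is convex with value
`min_{|S| = i} ∑_{j ∈ S} c_j` at abscissa `i`, every coefficient of `det(I − tA)`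
satisfies `v(coeff i) ≥ min_{|S| = i} ∑_{j ∈ S} c_j`. -/
theorem stmt19 (K : Type) [Field K] (v : K → ℝ)
    (hv_mul : ∀ x y : K, x ≠ 0 → y ≠ 0 → v (x * y) = v x + v y)
    (hv_add : ∀ x y : K, x ≠ 0 → y ≠ 0 → x + y ≠ 0 → min (v x) (v y) ≤ v (x + y))
    (N : ℕ) (A : Matrix (Fin N) (Fin N) K) (c : Fin N → ℝ)
    (hA : ∀ i j, A i j ≠ 0 → c j ≤ v (A i j)) :
    ∀ i : ℕ, ∀ hi : i ≤ N,
      (Matrix.det (1 - (Polynomial.X : Polynomial K) • A.map Polynomial.C)).coeff i ≠ 0 →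
      (Finset.powersetCard i (Finset.univ : Finset (Fin N))).inf'
          (by
            rw [Finset.powersetCard_nonempty]
            simpa using hi)
          (fun S => ∑ j ∈ S, c j) ≤
        v ((Matrix.det (1 - (Polynomial.X : Polynomial K) • A.map Polynomial.C)).coeff i) := by
  intro i hi hne
  have key := (AddValuation.ofNeZero v hv_mul hv_add).inf_sum_le_map_coeff_charpolyRev
    (fun i j => AddValuation.coe_le_ofNeZero (hA i j)) i
  rw [Matrix.charpolyRev, AddValuation.ofNeZero_apply_of_ne_zero hne] at key
  rw [← WithTop.coe_le_coe, Finset.coe_inf']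
  simpa only [Function.comp_def, WithTop.coe_sum] using key
end
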